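/- Let d be a positive integer, let l, u ∈ ℝ^d with l_i ≤ 0 ≤ u_i for all i, let s ∈ ℝ^d, and let L > 0, λ > 0. Set T = ‖s‖² − ‖Π_{[l,u]}(s) − s‖². (i) If T > 2λ/L, then Π_{[l,u]}(s) ≠ 0 and Π_{[l,u]}(s) is a global minimizer over the box [l,u] of the function φ(δ) = (L/2)‖δ − s‖² + λ·𝟙[δ ≠ 0], with minimum value (L/2)‖Π_{[l,u]}(s) − s‖² + λ. (ii) If T ≤ 2λ/L, then 0 is a global minimizer of φ over [l,u], with minimum value (L/2)‖s‖². -/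
import Mathlib


attribute [local instance] Classical.propDecidable

/-- Componentwise clamp (projection onto the box `[l, u]`). -/
noncomputable def clampProj {d : ℕ} (l u s : Fin d → ℝ) : Fin d → ℝ :=
  fun i => max (l i) (min (u i) (s i))

/-- Membership in the box `[l, u]`. -/
def inBox {d : ℕ} (l u δ : Fin d → ℝ) : Prop :=
  ∀ i, l i ≤ δ i ∧ δ i ≤ u i

lemma clamp_pt (a b x y : ℝ) (hab : a ≤ b) (h1 : a ≤ y) (h2 : y ≤ b) :
    (max a (min b x) - x) ^ 2 ≤ (y - x) ^ 2 := by
  rcases le_total x a with h | h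
  · rw [min_eq_right (h.trans hab), max_eq_left h]
    nlinarith
  · rcases le_total b x with h' | h'
    · rw [min_eq_left h', max_eq_right hab]
      nlinarith
    · rw [min_eq_right h', max_eq_right h]
      simpa using sq_nonneg (y - x)

/-- Single-group proximal subproblem: hard-thresholding dichotomy.
(i) If `T > 2λ/L` then the clamp of `s` is nonzero and is a global minimizer of
`φ(δ) = (L/2)‖δ − s‖² + λ·𝟙[δ ≠ 0]` over the box, with value
`(L/2)‖Π(s) − s‖² + λ`; (ii) if `T ≤ 2λ/L` then `0` is a global minimizer,
with value `(L/2)‖s‖²`. -/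
theorem single_group_prox_dichotomy (d : ℕ) (hd : 0 < d)
    (l u s : Fin d → ℝ) (hlu : ∀ i, l i ≤ 0 ∧ 0 ≤ u i)
    (L lam : ℝ) (hL : 0 < L) (hlam : 0 < lam)
    (T : ℝ)
    (hT : T = (∑ i, (s i) ^ 2) - ∑ i, (clampProj l u s i - s i) ^ 2)
    (φ : (Fin d → ℝ) → ℝ)
    (hφ : ∀ δ : Fin d → ℝ,
      φ δ = L / 2 * (∑ i, (δ i - s i) ^ 2) +
        lam * (if δ ≠ 0 then (1 : ℝ) else 0)) :
    (T > 2 * lam / L →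
      clampProj l u s ≠ 0 ∧
      inBox l u (clampProj l u s) ∧
      (∀ δ : Fin d → ℝ, inBox l u δ → φ (clampProj l u s) ≤ φ δ) ∧
      φ (clampProj l u s) =
        L / 2 * (∑ i, (clampProj l u s i - s i) ^ 2) + lam) ∧
    (T ≤ 2 * lam / L →
      inBox l u (0 : Fin d → ℝ) ∧
      (∀ δ : Fin d → ℝ, inBox l u δ → φ 0 ≤ φ δ) ∧
      φ 0 = L / 2 * ∑ i, (s i) ^ 2) := by
  have hab : ∀ i, l i ≤ u i := fun i => (hlu i).1.trans (hlu i).2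
  have hbox : inBox l u (clampProj l u s) := by
    intro i
    refine ⟨le_max_left _ _, max_le (hab i) (min_le_left _ _)⟩
  -- key inequality
  have hkey : ∀ δ : Fin d → ℝ, inBox l u δ →
      (∑ i, (clampProj l u s i - s i) ^ 2) ≤ ∑ i, (δ i - s i) ^ 2 := by
    intro δ hδ
    apply Finset.sum_le_sum
    intro i _
    exact clamp_pt (l i) (u i) (s i) (δ i) (hab i) (hδ i).1 (hδ i).2
  have hφ0 : φ 0 = L / 2 * ∑ i, (s i) ^ 2 := by
    rw [hφ]
    simp
  constructor
  · intro hTgt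
    have hTpos : (0:ℝ) < T := lt_trans (div_pos (by linarith) hL) hTgt
    have hne : clampProj l u s ≠ 0 := by
      intro h
      rw [h] at hT
      have h0 : T = 0 := by
        rw [hT]
        have he : ∀ i ∈ Finset.univ, ((0:Fin d → ℝ) i - s i) ^ 2 = (s i) ^ 2 := by
          intro i _; simp
        rw [Finset.sum_congr rfl he]
        ring
      linarith
    have hval : φ (clampProj l u s) =
        L / 2 * (∑ i, (clampProj l u s i - s i) ^ 2) + lam := by
      rw [hφ, if_pos hne]; ring
    refine ⟨hne, hbox, ?_, hval⟩
    intro δ hδ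
    by_cases hδ0 : δ = 0
    · subst hδ0
      rw [hφ0, hval]
      have h1 : lam < L * T / 2 := by
        rw [gt_iff_lt, div_lt_iff₀ hL] at hTgt
        linarith
      rw [hT] at h1
      linarith [hkey _ hδ]
    · rw [hval, hφ δ, if_pos hδ0]
      have := hkey δ hδ
      nlinarith
  · intro hTle
    have hbox0 : inBox l u (0 : Fin d → ℝ) := fun i => hlu i
    refine ⟨hbox0, ?_, hφ0⟩
    intro δ hδ
    by_cases hδ0 : δ = 0
    · subst hδ0; exact le_refl _
    · rw [hφ0, hφ δ, if_pos hδ0]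
      have h1 : L * T / 2 ≤ lam := by
        rw [le_div_iff₀ hL] at hTle
        linarith
      rw [hT] at h1
      have := hkey δ hδ
      nlinarith
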